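/- arXiv:2106.02614 — 3 statements merged into one kernel-verified Lean document; each statement's English description precedes it below -/
import Mathlib

section
/- Let ω be a random vector in ℝ^d with distribution Λ whose Fourier transform gives the kernel κ (i.e., κ(u) = E[cos(ωᵀu)]), and let ξ ∼ U([0,2π)) be independent of ω. Then for any x, y ∈ ℝ^d, E[cos²(ωᵀx + ξ)·cos²(ωᵀy + ξ)] = 1/4 + (1/8)·κ(2x − 2y). -/
open MeasureTheory ProbabilityTheory Real

/-- The uniform distribution on `[0, 2π)`. -/
noncomputable def uniformPhase : Measure ℝ :=
  (ENNReal.ofReal (2 * Real.pi))⁻¹ • (volume.restrict (Set.Ico 0 (2 * Real.pi)))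

/-!
Expanding `cos² θ = (1 + cos 2θ) / 2` and the product of the two cosines, the integrand is
`1/4 + cos (2s - 2t) / 8` plus terms of the form `cos (Z + n ξ)` with `n ∈ {2, 4}` and `Z` a function
of `ω`. As `ξ` is uniform and independent of `ω`, averaging over the phase first kills those terms,
and the remaining cosine averages to `κ (2x - 2y)`.
-/

instance isProbabilityMeasure_uniformPhase : IsProbabilityMeasure uniformPhase where
  measure_univ := by
    rw [uniformPhase, Measure.smul_apply, Measure.restrict_apply_univ, Real.volume_Ico, sub_zero,
      smul_eq_mul, ENNReal.inv_mul_cancel (by simp [Real.pi_pos]) ENNReal.ofReal_ne_top]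

theorem integral_cos_add_nat_mul_uniformPhase (c : ℝ) {n : ℕ} (hn : n ≠ 0) :
    ∫ u, cos (c + n * u) ∂uniformPhase = 0 := by
  rw [uniformPhase, integral_smul_measure, integral_Ico_eq_integral_Ioo,
    ← integral_Ioc_eq_integral_Ioo, ← intervalIntegral.integral_of_le (by positivity),
    intervalIntegral.integral_comp_add_mul _ (Nat.cast_ne_zero.mpr hn), integral_cos]
  simp only [mul_zero, add_zero, sin_add_nat_mul_two_pi, sub_self, smul_zero]

theorem integral_cos_add_nat_mul_eq_zero {Ω : Type*} [MeasurableSpace Ω] {μ : Measure Ω}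
    [IsProbabilityMeasure μ] {Z ξ : Ω → ℝ} (hZ : Measurable Z) (hξ : Measurable ξ)
    (hξdist : μ.map ξ = uniformPhase) (hindep : IndepFun Z ξ μ) {n : ℕ} (hn : n ≠ 0) :
    ∫ a, cos (Z a + n * ξ a) ∂μ = 0 := by
  have hg : Measurable fun p : ℝ × ℝ => cos (p.1 + n * p.2) := by fun_prop
  have hint : Integrable (fun p : ℝ × ℝ => cos (p.1 + n * p.2)) ((μ.map Z).prod uniformPhase) :=
    .of_bound hg.aestronglyMeasurable 1 (ae_of_all _ fun p => abs_cos_le_one _)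
  rw [← integral_map (φ := fun a => (Z a, ξ a)) (hZ.prodMk hξ).aemeasurable
      hg.aestronglyMeasurable, (indepFun_iff_map_prod_eq_prod_map_map hZ.aemeasurable
      hξ.aemeasurable).mp hindep, hξdist, integral_prod _ hint]
  simp [integral_cos_add_nat_mul_uniformPhase _ hn]

theorem cos_sq_mul_cos_sq (A B : ℝ) :
    cos A ^ 2 * cos B ^ 2 = 1 / 4 + 1 / 8 * cos (2 * A - 2 * B)
      + (1 / 4 * cos (2 * A) + 1 / 4 * cos (2 * B) + 1 / 8 * cos (2 * A + 2 * B)) := by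
  rw [cos_sq A, cos_sq B, cos_sub, cos_add]
  ring

@[fun_prop]
theorem integrable_cos_comp {Ω : Type*} [MeasurableSpace Ω] {μ : Measure Ω} [IsFiniteMeasure μ]
    {f : Ω → ℝ} (hf : Measurable f) : Integrable (fun a => cos (f a)) μ :=
  .of_bound (by fun_prop) 1 (ae_of_all _ fun _ => abs_cos_le_one _)

theorem integral_cos_sq_add_mul_cos_sq_add {Ω : Type*} [MeasurableSpace Ω] {μ : Measure Ω}
    [IsProbabilityMeasure μ] {S T ξ : Ω → ℝ} (hS : Measurable S) (hT : Measurable T)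
    (hξ : Measurable ξ) (hξdist : μ.map ξ = uniformPhase)
    (hindep : IndepFun (fun a => (S a, T a)) ξ μ) :
    ∫ a, cos (S a + ξ a) ^ 2 * cos (T a + ξ a) ^ 2 ∂μ
      = 1 / 4 + 1 / 8 * ∫ a, cos (2 * S a - 2 * T a) ∂μ := by
  have hphase_mean : ∀ {f : ℝ × ℝ → ℝ}, Measurable f → ∀ {n : ℕ}, n ≠ 0 →
      ∫ a, cos (f (S a, T a) + n * ξ a) ∂μ = 0 := fun hf _ hn =>
    integral_cos_add_nat_mul_eq_zero (hf.comp (hS.prodMk hT)) hξ hξdist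
      (hindep.comp hf measurable_id) hn
  have hS2 : ∫ a, cos (2 * (S a + ξ a)) ∂μ = 0 := by
    simpa [mul_add] using hphase_mean (f := fun p => 2 * p.1) (by fun_prop) two_ne_zero
  have hT2 : ∫ a, cos (2 * (T a + ξ a)) ∂μ = 0 := by
    simpa [mul_add] using hphase_mean (f := fun p => 2 * p.2) (by fun_prop) two_ne_zero
  have hST : ∫ a, cos (2 * (S a + ξ a) + 2 * (T a + ξ a)) ∂μ = 0 := by
    convert hphase_mean (f := fun p => 2 * p.1 + 2 * p.2) (by fun_prop) four_ne_zero using 4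
    push_cast; ring
  have hdiff : ∀ a, 2 * (S a + ξ a) - 2 * (T a + ξ a) = 2 * S a - 2 * T a := fun a => by ring
  simp_rw [cos_sq_mul_cos_sq, hdiff]
  rw [integral_add, integral_add, integral_add, integral_add, integral_const, integral_const_mul,
    integral_const_mul, integral_const_mul, integral_const_mul, hS2, hT2, hST]
  · simp
  all_goals fun_prop

theorem stmt_1
    {Ω : Type*} [MeasureSpace Ω] [IsProbabilityMeasure (ℙ : Measure Ω)]
    {d : ℕ} (ω : Ω → (Fin d → ℝ)) (ξ : Ω → ℝ)
    (hωmeas : Measurable ω) (hξmeas : Measurable ξ)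
    (hξdist : Measure.map ξ ℙ = uniformPhase)
    (hindep : IndepFun ω ξ ℙ)
    (κ : (Fin d → ℝ) → ℝ)
    (hκ : ∀ u : Fin d → ℝ, κ u = ∫ a, Real.cos (∑ i, ω a i * u i) ∂ℙ)
    (x y : Fin d → ℝ) :
    ∫ a, (Real.cos ((∑ i, ω a i * x i) + ξ a)) ^ 2 * (Real.cos ((∑ i, ω a i * y i) + ξ a)) ^ 2 ∂ℙ
      = 1 / 4 + (1 / 8) * κ (2 • x - 2 • y) := by
  have hproj : Measurable fun w : Fin d → ℝ => (∑ i, w i * x i, ∑ i, w i * y i) := by fun_prop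
  rw [integral_cos_sq_add_mul_cos_sq_add (by fun_prop) (by fun_prop) hξmeas hξdist
    (hindep.comp hproj measurable_id), hκ]
  congr 3 with a
  simp only [Pi.sub_apply, nsmul_eq_mul, Nat.cast_ofNat, Pi.mul_apply, Pi.ofNat_apply,
    mul_sub, Finset.sum_sub_distrib, Finset.mul_sum, mul_left_comm]
end

section
/- Let V_β = I_p ⊗ v_β and H = I_p ⊗ H_β with v_β = (β^{−1},…,β^{−λ}) and H_β lower bidiagonal (diagonal 1, subdiagonal −β), and let m = λp. Suppose u_x, u_y ∈ ℝ^m satisfy ‖u_x‖_∞ ≤ c and ‖u_y‖_∞ ≤ c. Let Ṽ_β = (√2/(√p‖v_β‖₂)) V_β. Then |⟨Ṽ_β H u_x, Ṽ_β H u_y⟩| ≤ 2c²/β^{2λ−2}. -/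
/-!
Against `v_β` the columns of `H_β` telescope: `β^{-(j+1)} - β · β^{-(j+2)} = 0`, so
`v_β H_β = β^{-λ} e_λ`. Hence the `i`-th entry of `Ṽ_β H u` is
`√2 β^{-λ} u_{i,λ} / (√p ‖v_β‖₂)`, and the inner product is at most
`p · 2 β^{-2λ} c² / (p ‖v_β‖₂²) ≤ 2 c² β^{2-2λ}`, because `‖v_β‖₂ ≥ β^{-1}`.
-/

open Matrix Finset

section Kronecker

variable {ι κ R : Type*} [Fintype ι] [Fintype κ] [DecidableEq ι] [CommSemiring R]

theorem blockDiag_mulVec_apply (M : Matrix κ κ R) (u : ι × κ → R) (i : ι) (b : κ) :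
    ((fun a b : ι × κ => if a.1 = b.1 then M a.2 b.2 else 0 : Matrix (ι × κ) (ι × κ) R) *ᵥ u)
        (i, b) = (M *ᵥ fun b' => u (i, b')) b := by
  simp [mulVec, dotProduct, Fintype.sum_prod_type, ite_mul]

theorem blockRow_dotProduct_blockDiag_mulVec (w : κ → R) (M : Matrix κ κ R) (u : ι × κ → R)
    (i : ι) :
    (fun c : ι × κ => if c.1 = i then w c.2 else 0) ⬝ᵥ
        ((fun a b : ι × κ => if a.1 = b.1 then M a.2 b.2 else 0 : Matrix (ι × κ) (ι × κ) R) *ᵥ u)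
      = (w ᵥ* M) ⬝ᵥ fun b => u (i, b) := by
  rw [← dotProduct_mulVec]
  simp [dotProduct, Fintype.sum_prod_type, ite_mul, blockDiag_mulVec_apply]

end Kronecker

theorem abs_sum_mul_le_card_mul_sq {ι R : Type*} [Fintype ι] [CommRing R] [LinearOrder R]
    [IsStrictOrderedRing R] {x y : ι → R} {C : R} (hx : ∀ i, |x i| ≤ C) (hy : ∀ i, |y i| ≤ C) :
    |∑ i, x i * y i| ≤ Fintype.card ι * C ^ 2 :=
  calc |∑ i, x i * y i| ≤ ∑ i, |x i| * |y i| := by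
        simpa only [abs_mul] using abs_sum_le_sum_abs (fun i => x i * y i) univ
    _ ≤ ∑ _i : ι, C ^ 2 := sum_le_sum fun i _ =>
        sq C ▸ mul_le_mul (hx i) (hy i) (abs_nonneg _) ((abs_nonneg _).trans (hx i))
    _ = Fintype.card ι * C ^ 2 := by simp

namespace NoiseShaping

noncomputable def condensationVec (β : ℝ) (lam : ℕ) : Fin lam → ℝ :=
  fun j => β ^ (-(((j : ℕ) : ℤ) + 1))

def noiseShapingMatrix (β : ℝ) (lam : ℕ) : Matrix (Fin lam) (Fin lam) ℝ :=
  fun i j => if i = j then 1 else if (i : ℕ) = (j : ℕ) + 1 then -β else 0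

variable {β : ℝ}

theorem vecMul_condensationVec_noiseShapingMatrix (hβ : β ≠ 0) (n : ℕ) :
    condensationVec β (n + 1) ᵥ* noiseShapingMatrix β (n + 1) =
      Pi.single (Fin.last n) (β ^ (n + 1))⁻¹ := by
  ext j
  induction j using Fin.lastCases with
  | last =>
    rw [vecMul, dotProduct, Fintype.sum_eq_single (Fin.last n)]
    · simp only [noiseShapingMatrix, condensationVec, ite_true, mul_one, Pi.single_eq_same]
      rw [← zpow_natCast, ← _root_.zpow_neg]
      push_cast
      ring_nf
    · intro j hj
      have : (j : ℕ) ≠ n + 1 := by omega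
      simp [noiseShapingMatrix, hj, this]
  | cast k =>
    rw [vecMul, dotProduct, Fintype.sum_eq_add k.castSucc k.succ Fin.castSucc_lt_succ.ne]
    · have hshift : β ^ (-1 + (-1 + -(k : ℤ))) * β = β ^ (-1 + -(k : ℤ)) := by
        rw [← zpow_add_one₀ hβ]
        ring_nf
      simp [noiseShapingMatrix, condensationVec, Fin.castSucc_ne_last, Fin.castSucc_lt_succ.ne',
        hshift]
    · rintro j ⟨hj, hj'⟩
      have : (j : ℕ) ≠ k + 1 := fun h => hj' (Fin.ext h)
      simp [noiseShapingMatrix, hj, this]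

theorem inv_sq_le_sum_condensationVec_sq (n : ℕ) :
    (β ^ 2)⁻¹ ≤ ∑ j, condensationVec β (n + 1) j ^ 2 :=
  calc (β ^ 2)⁻¹ = condensationVec β (n + 1) 0 ^ 2 := by simp [condensationVec]
    _ ≤ _ := single_le_sum (fun j _ => sq_nonneg _) (mem_univ 0)

end NoiseShaping

open NoiseShaping

theorem stmt_8_general (p lam : ℕ) (hp : 0 < p) (hlam : 0 < lam)
    (β : ℝ) (hβ1 : 1 < β)
    (C : ℝ) (ux uy : Fin p × Fin lam → ℝ)
    (hux : ∀ c, |ux c| ≤ C) (huy : ∀ c, |uy c| ≤ C) :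
    (let vβ : Fin lam → ℝ := fun j => β ^ (-(((j : ℕ) : ℤ) + 1))
     let Hβ : Matrix (Fin lam) (Fin lam) ℝ :=
       fun i j => if i = j then 1 else if (i : ℕ) = (j : ℕ) + 1 then -β else 0
     -- H = I_p ⊗ H_β
     let H : Matrix (Fin p × Fin lam) (Fin p × Fin lam) ℝ :=
       fun a b => if a.1 = b.1 then Hβ a.2 b.2 else 0
     let nv : ℝ := Real.sqrt (∑ j, (vβ j) ^ 2)
     -- Ṽ_β = (√2/(√p ‖v_β‖₂)) (I_p ⊗ v_β)
     let Vt : Fin p → (Fin p × Fin lam) → ℝ :=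
       fun i c => (Real.sqrt 2 / (Real.sqrt p * nv)) * (if c.1 = i then vβ c.2 else 0)
     |∑ i : Fin p, (∑ c, Vt i c * H.mulVec ux c) * (∑ c, Vt i c * H.mulVec uy c)|)
      ≤ 2 * C ^ 2 / β ^ (2 * lam - 2) := by
  extract_lets vβ Hβ H nv Vt
  obtain ⟨n, rfl⟩ : ∃ n, lam = n + 1 := ⟨lam - 1, by omega⟩
  have hβ : β ≠ 0 := (zero_lt_one.trans hβ1).ne'
  set s := √2 / (√p * nv)
  set B := (β ^ (n + 1))⁻¹
  have hrow (u : Fin p × Fin (n + 1) → ℝ) (i : Fin p) :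
      ∑ c, Vt i c * H.mulVec u c = s * B * u (i, Fin.last n) := by
    have := blockRow_dotProduct_blockDiag_mulVec (condensationVec β (n + 1))
      (noiseShapingMatrix β (n + 1)) u i
    rw [vecMul_condensationVec_noiseShapingMatrix hβ, single_dotProduct] at this
    simp only [Vt, mul_assoc, ← mul_sum]
    exact congrArg (s * ·) this
  have hnv : (β ^ 2)⁻¹ ≤ nv ^ 2 := by
    rw [Real.sq_sqrt (by positivity)]
    exact inv_sq_le_sum_condensationVec_sq n
  have hscale : (s * B) ^ 2 * p ≤ 2 / β ^ (2 * (n + 1) - 2) :=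
    calc (s * B) ^ 2 * p = 2 / (nv ^ 2 * β ^ (2 * (n + 1))) := by
          have hp' : (p : ℝ) ≠ 0 := by positivity
          simp only [s, B]
          rw [mul_pow, div_pow, mul_pow, Real.sq_sqrt zero_le_two, Real.sq_sqrt p.cast_nonneg]
          field_simp
          ring
      _ ≤ 2 / ((β ^ 2)⁻¹ * β ^ (2 * (n + 1))) := by gcongr
      _ = 2 / β ^ (2 * (n + 1) - 2) := by
          rw [show 2 * (n + 1) - 2 = 2 * n by omega]
          field_simp
          ring
  simp only [hrow]
  calc _ = (s * B) ^ 2 * |∑ i, ux (i, Fin.last n) * uy (i, Fin.last n)| := by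
        rw [← abs_sq (s * B), ← abs_mul, mul_sum]
        ring_nf
    _ ≤ (s * B) ^ 2 * (p * C ^ 2) := by
        gcongr
        simpa using abs_sum_mul_le_card_mul_sq (fun i => hux (i, _)) (fun i => huy (i, _))
    _ ≤ 2 * C ^ 2 / β ^ (2 * (n + 1) - 2) := by
        rw [← mul_assoc, mul_div_right_comm]
        gcongr

/-- Bound on the quantization-noise cross term for the distributed noise-shaping
condensation operator: `|⟨Ṽ_β H u_x, Ṽ_β H u_y⟩| ≤ 2c²/β^{2λ−2}`. -/
theorem stmt_8 (p lam : ℕ) (hp : 0 < p) (hlam : 0 < lam)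
    (β : ℝ) (hβ1 : 1 < β) (hβ2 : β < 2)
    (C : ℝ) (ux uy : Fin p × Fin lam → ℝ)
    (hux : ∀ c, |ux c| ≤ C) (huy : ∀ c, |uy c| ≤ C) :
    (let vβ : Fin lam → ℝ := fun j => β ^ (-(((j : ℕ) : ℤ) + 1))
     let Hβ : Matrix (Fin lam) (Fin lam) ℝ :=
       fun i j => if i = j then 1 else if (i : ℕ) = (j : ℕ) + 1 then -β else 0
     -- H = I_p ⊗ H_β
     let H : Matrix (Fin p × Fin lam) (Fin p × Fin lam) ℝ :=
       fun a b => if a.1 = b.1 then Hβ a.2 b.2 else 0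
     let nv : ℝ := Real.sqrt (∑ j, (vβ j) ^ 2)
     -- Ṽ_β = (√2/(√p ‖v_β‖₂)) (I_p ⊗ v_β)
     let Vt : Fin p → (Fin p × Fin lam) → ℝ :=
       fun i c => (Real.sqrt 2 / (Real.sqrt p * nv)) * (if c.1 = i then vβ c.2 else 0)
     |∑ i : Fin p, (∑ c, Vt i c * H.mulVec ux c) * (∑ c, Vt i c * H.mulVec uy c)|)
      ≤ 2 * C ^ 2 / β ^ (2 * lam - 2) :=
  stmt_8_general p lam hp hlam β hβ1 C ux uy hux huy
end

section
/- Let r ∈ ℕ, and let V_{ΣΔ} = I_p ⊗ v be the r-th order Sigma-Delta condensation operator with v the coefficient vector of (1 + z + … + z^{λ̃−1})^r, and D ∈ ℝ^{m×m} the first-order difference matrix (1 on diagonal, −1 on first subdiagonal). If ‖u_x‖_∞, ‖u_y‖_∞ ≤ c(K,r), then with Ṽ_{ΣΔ} = (√2/(√p‖v‖₂)) V_{ΣΔ}, there is a constant c'(r) depending only on r such that |⟨Ṽ_{ΣΔ} D^r u_x, Ṽ_{ΣΔ} D^r u_y⟩| ≤ c(K,r)² c'(r)/λ^{2r−1}.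 -/
/-!
The difference matrix `D` is multiplication by `1 - X` on coefficient vectors, and row `i` of
`V_{ΣΔ}` is the coefficient vector of `X^{λ i} v(X)`. Hence row `i` of `V_{ΣΔ} D^r` is, up to
reflection, the coefficient vector of `X^{λ i} v(X) (X - 1)^r = X^{λ i} (X^{λ̃} - 1)^r`, which has
`r + 1` nonzero entries `± C(r, k)`; so each entry of `V_{ΣΔ} D^r u` is at most `2^r ‖u‖_∞`.
For the normalisation, `v(1) = λ̃^r` and `λ ≤ r λ̃`, so Cauchy–Schwarz gives
`‖v‖₂² ≥ v(1)² / λ ≥ λ^{2r-1} / r^{2r}`.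
-/

open Polynomial Finset
open scoped Matrix

section DiffMatrix

variable {R : Type*} [CommRing R]

variable (R) in
def diffMatrix (n : ℕ) : Matrix (Fin n) (Fin n) R :=
  fun a b => if a = b then 1 else if (a : ℕ) = (b : ℕ) + 1 then -1 else 0

theorem natDegree_X_pow_mul_X_sub_one_pow_le (c r : ℕ) :
    (X ^ c * (X - 1) ^ r : R[X]).natDegree ≤ c + r := by
  compute_degree

/-- `D^r` is multiplication by `(1 - X)^r`; reading entry `(c, b)` off `X^c (X - 1)^r` at `b + r`
reflects the column index and so avoids truncated subtraction. -/
theorem diffMatrix_pow_apply (n r : ℕ) (c b : Fin n) :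
    (diffMatrix R n ^ r) c b = (X ^ (c : ℕ) * (X - 1) ^ r : R[X]).coeff (b + r) := by
  induction r generalizing b with
  | zero => simp [Matrix.one_apply, coeff_X_pow, Fin.ext_iff, eq_comm]
  | succ r ih =>
    set Q : R[X] := X ^ (c : ℕ) * (X - 1) ^ r
    have hcol : ∀ a : Fin n, diffMatrix R n a b =
        (if a = b then 1 else 0) - (if (a : ℕ) = b + 1 then 1 else 0) := by
      intro a
      unfold diffMatrix
      split_ifs <;> simp_all [Fin.ext_iff]
    have hnext : ∑ a : Fin n, (if (a : ℕ) = b + 1 then Q.coeff (a + r) else 0) =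
        Q.coeff (b + 1 + r) := by
      rw [Fin.sum_univ_eq_sum_range (fun a => if a = b + 1 then Q.coeff (a + r) else 0),
        sum_ite_eq']
      split_ifs with h
      · rfl
      · have hQ : Q.natDegree ≤ c + r := natDegree_X_pow_mul_X_sub_one_pow_le c r
        have := c.isLt
        rw [mem_range] at h
        exact (coeff_eq_zero_of_natDegree_lt (by omega)).symm
    have hpoly : (X ^ (c : ℕ) * (X - 1) ^ (r + 1) : R[X]) = Q * X - Q := by ring
    rw [pow_succ, Matrix.mul_apply, hpoly, ← add_assoc, coeff_sub, coeff_mul_X]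
    simp only [hcol, mul_sub, mul_ite, mul_one, mul_zero, sum_sub_distrib, sum_ite_eq', mem_univ,
      if_true, ih]
    rw [hnext, add_right_comm]

theorem vecMul_diffMatrix_pow_apply {n : ℕ} (Q : R[X]) (hQ : Q.natDegree < n) (r : ℕ)
    (b : Fin n) :
    ((fun c : Fin n => Q.coeff c) ᵥ* diffMatrix R n ^ r) b = (Q * (X - 1) ^ r).coeff (b + r) := by
  simp only [Matrix.vecMul, dotProduct, diffMatrix_pow_apply, ← coeff_C_mul, ← finsetSum_coeff,
    ← mul_assoc, ← sum_mul]
  rw [Fin.sum_univ_eq_sum_range (fun c => C (Q.coeff c) * X ^ c), ← as_sum_range_C_mul_X_pow' Q hQ]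

end DiffMatrix

def condensation {R : Type*} [Zero R] (lam p : ℕ) (v : ℕ → R) :
    Matrix (Fin p) (Fin (lam * p)) R :=
  fun i c => if (c : ℕ) / lam = i then v (c % lam) else 0

theorem condensation_apply_eq_coeff {R : Type*} [Semiring R] {lam p : ℕ} (P : R[X])
    (hP : P.natDegree < lam) (i : Fin p) (c : Fin (lam * p)) :
    condensation lam p P.coeff i c = (X ^ (lam * i) * P).coeff c := by
  unfold condensation
  generalize (i : ℕ) = i, (c : ℕ) = c
  have hlam : 0 < lam := by omega
  have hdiv := Nat.div_add_mod c lam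
  have hmod := Nat.mod_lt c hlam
  rw [coeff_X_pow_mul']
  split_ifs with h hle hle
  · subst h; congr 1; omega
  · subst h; exact absurd (Nat.mul_div_le c lam) (by rw [mul_comm]; omega)
  · have hi : i ≤ c / lam := (Nat.le_div_iff_mul_le hlam).2 (by rwa [mul_comm])
    have := Nat.mul_le_mul_left lam (show i + 1 ≤ c / lam by omega)
    rw [mul_add_one] at this
    exact (coeff_eq_zero_of_natDegree_lt (by omega)).symm
  · rfl

section RowBound

variable {n : ℕ} {K : ℝ} (u : Fin n → ℝ)

theorem abs_sum_coeff_X_pow_mul_le (hK : 0 ≤ K) (hu : ∀ b, |u b| ≤ K) (k e : ℕ) :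
    |∑ b : Fin n, (X ^ e : ℝ[X]).coeff ((b : ℕ) + k) * u b| ≤ K := by
  simp only [coeff_X_pow, ite_mul, one_mul, zero_mul]
  by_cases h : ∃ b : Fin n, (b : ℕ) + k = e
  · obtain ⟨b, hb⟩ := h
    rw [sum_eq_single b (fun b' _ hb' => if_neg fun h => hb' (Fin.ext (by omega))) (by simp),
      if_pos hb]
    exact hu b
  · push Not at h
    simpa [h] using hK

theorem X_pow_mul_X_pow_sub_one_pow (m l r : ℕ) :
    (X ^ m * (X ^ l - 1) ^ r : ℝ[X]) =
      ∑ j ∈ range (r + 1), C ((-1 : ℝ) ^ (j + r) * r.choose j) * X ^ (m + l * j) := by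
  rw [sub_pow, mul_sum]
  refine sum_congr rfl fun j _ => ?_
  simp only [map_mul, map_pow, map_neg, map_one, map_natCast, one_pow, pow_add, pow_mul]
  ring

theorem abs_sum_coeff_X_pow_mul_X_pow_sub_one_pow_mul_le (hK : 0 ≤ K) (hu : ∀ b, |u b| ≤ K)
    (m l r : ℕ) :
    |∑ b : Fin n, (X ^ m * (X ^ l - 1) ^ r : ℝ[X]).coeff ((b : ℕ) + r) * u b| ≤ 2 ^ r * K := by
  have hchoose : (2 : ℝ) ^ r = ∑ j ∈ range (r + 1), (r.choose j : ℝ) := by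
    exact_mod_cast (Nat.sum_range_choose r).symm
  rw [X_pow_mul_X_pow_sub_one_pow, hchoose, sum_mul]
  simp only [finsetSum_coeff, coeff_C_mul, sum_mul, mul_assoc]
  rw [sum_comm]
  simp only [← mul_sum]
  refine (abs_sum_le_sum_abs _ _).trans (sum_le_sum fun j _ => ?_)
  rw [abs_mul, abs_mul, abs_pow, abs_neg, abs_one, one_pow, one_mul, Nat.abs_cast]
  gcongr
  exact abs_sum_coeff_X_pow_mul_le u hK hu r _

end RowBound

theorem condensation_mulVec_diffMatrix_pow_mulVec {R : Type*} [CommRing R] {lam p : ℕ}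
    (P : R[X]) (hP : P.natDegree < lam) (r : ℕ) (u : Fin (lam * p) → R) (i : Fin p) :
    (condensation lam p P.coeff *ᵥ (diffMatrix R (lam * p) ^ r *ᵥ u)) i =
      ∑ b, (X ^ (lam * i) * P * (X - 1) ^ r).coeff (b + r) * u b := by
  have hrow : condensation lam p P.coeff i = fun c => (X ^ (lam * i) * P).coeff c :=
    funext (condensation_apply_eq_coeff P hP i)
  have hdeg : (X ^ (lam * i) * P).natDegree < lam * p := by
    have := natDegree_mul_le (p := (X ^ (lam * i) : R[X])) (q := P)
    have := natDegree_X_pow_le (R := R) (lam * i)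
    have := Nat.mul_le_mul_left lam (show (i : ℕ) + 1 ≤ p from i.isLt)
    rw [mul_add_one] at this
    omega
  rw [Matrix.mulVec, hrow, Matrix.dotProduct_mulVec]
  simp only [dotProduct, vecMul_diffMatrix_pow_apply _ hdeg]

theorem natDegree_geom_sum_pow_le {R : Type*} [Semiring R] (l r : ℕ) :
    ((∑ t ∈ range l, X ^ t : R[X]) ^ r).natDegree ≤ r * (l - 1) := by
  refine natDegree_pow_le_of_le r (natDegree_sum_le_of_forall_le _ _ fun t ht => ?_)
  have := mem_range.1 ht
  exact (natDegree_X_pow_le t).trans (by omega)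

theorem sq_eval_one_le_mul_sum_sq_coeff {n : ℕ} (P : ℝ[X]) (hP : P.natDegree < n) :
    P.eval 1 ^ 2 ≤ n * ∑ j ∈ range n, P.coeff j ^ 2 := by
  simpa [eval_eq_sum_range' hP] using sq_sum_le_card_mul_sum_sq (s := range n) (f := P.coeff)

theorem natDegree_geom_sum_pow_lt {r l lam : ℕ} (hlam : lam = r * l - r + 1) :
    ((∑ t ∈ range l, X ^ t : ℝ[X]) ^ r).natDegree < lam := by
  have := natDegree_geom_sum_pow_le (R := ℝ) l r
  rw [Nat.mul_sub_one] at this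
  omega

theorem pow_two_mul_sub_one_le_mul_sum_sq_coeff_geom_sum_pow {r l lam : ℕ} (hr : 1 ≤ r)
    (hl : 1 ≤ l) (hlam : lam = r * l - r + 1) :
    (lam : ℝ) ^ (2 * r - 1) ≤
      r ^ (2 * r) * ∑ j ∈ range lam, ((∑ t ∈ range l, X ^ t : ℝ[X]) ^ r).coeff j ^ 2 := by
  set S := ∑ j ∈ range lam, ((∑ t ∈ range l, X ^ t : ℝ[X]) ^ r).coeff j ^ 2
  have hCS := sq_eval_one_le_mul_sum_sq_coeff _ (natDegree_geom_sum_pow_lt hlam)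
  simp only [eval_pow, eval_finsetSum, eval_X, one_pow, sum_const, card_range, nsmul_one] at hCS
  have hlam_le : (lam : ℝ) ≤ r * l := by
    have := Nat.le_mul_of_pos_right r hl
    exact_mod_cast (by omega : lam ≤ r * l)
  have hlam_pos : (0 : ℝ) < lam := by exact_mod_cast (by omega : 0 < lam)
  refine le_of_mul_le_mul_right ?_ hlam_pos
  calc (lam : ℝ) ^ (2 * r - 1) * lam = lam ^ (2 * r) := by
        rw [← pow_succ, Nat.sub_add_cancel (by omega)]
    _ ≤ (r * l) ^ (2 * r) := by gcongr
    _ = r ^ (2 * r) * ((l : ℝ) ^ r) ^ 2 := by ring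
    _ ≤ r ^ (2 * r) * (lam * S) := by gcongr
    _ = r ^ (2 * r) * S * lam := by ring

theorem abs_sum_normalized_rows_mul_le {p n : ℕ} (hp : 0 < p) {S : ℝ} (hS : 0 < S)
    (V : Fin p → Fin n → ℝ) (x y : Fin n → ℝ) {K : ℝ}
    (hx : ∀ i, |∑ c, V i c * x c| ≤ K) (hy : ∀ i, |∑ c, V i c * y c| ≤ K) :
    |∑ i, (∑ c, Real.sqrt 2 / (Real.sqrt p * Real.sqrt S) * V i c * x c) *
        (∑ c, Real.sqrt 2 / (Real.sqrt p * Real.sqrt S) * V i c * y c)| ≤ 2 * K ^ 2 / S := by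
  set s := Real.sqrt 2 / (Real.sqrt p * Real.sqrt S)
  have hs : s ^ 2 = 2 / (p * S) := by
    rw [div_pow, mul_pow, Real.sq_sqrt zero_le_two, Real.sq_sqrt (Nat.cast_nonneg p),
      Real.sq_sqrt hS.le]
  have hK : 0 ≤ K := (abs_nonneg _).trans (hx ⟨0, hp⟩)
  have hfactor : ∀ (i : Fin p) (z : Fin n → ℝ),
      ∑ c, s * V i c * z c = s * ∑ c, V i c * z c := fun i z => by
    simp only [mul_assoc, mul_sum]
  simp only [hfactor]
  calc |∑ i, (s * ∑ c, V i c * x c) * (s * ∑ c, V i c * y c)|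
      = |s ^ 2 * ∑ i, (∑ c, V i c * x c) * (∑ c, V i c * y c)| := by
        rw [mul_sum]
        exact congrArg _ (sum_congr rfl fun i _ => by ring)
    _ = s ^ 2 * |∑ i, (∑ c, V i c * x c) * (∑ c, V i c * y c)| := by
        rw [abs_mul, abs_of_nonneg (sq_nonneg s)]
    _ ≤ s ^ 2 * ∑ _i : Fin p, K * K := by
        gcongr
        refine (abs_sum_le_sum_abs _ _).trans (sum_le_sum fun i _ => ?_)
        rw [abs_mul]
        exact mul_le_mul (hx i) (hy i) (abs_nonneg _) hK
    _ = 2 * K ^ 2 / S := by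
        rw [hs, sum_const, card_univ, Fintype.card_fin, nsmul_eq_mul]
        field_simp

/-- Bound on the quantization-noise cross term for the r-th order Sigma-Delta
condensation operator: there is a constant `c'(r)` depending only on `r` such that
`|⟨Ṽ_{ΣΔ} D^r u_x, Ṽ_{ΣΔ} D^r u_y⟩| ≤ c(K,r)² c'(r)/λ^{2r−1}`. -/
theorem stmt_9 (r : ℕ) (hr : 1 ≤ r) :
    ∃ c' : ℝ, 0 < c' ∧
      ∀ (p lt lam : ℕ), 0 < p → 1 ≤ lt → lam = r * lt - r + 1 →
      ∀ (C : ℝ) (ux uy : Fin (lam * p) → ℝ),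
        (∀ c, |ux c| ≤ C) → (∀ c, |uy c| ≤ C) →
        -- v = coefficient vector of (1 + X + … + X^{λ̃−1})^r
        (let v : ℕ → ℝ := fun j => ((∑ t ∈ Finset.range lt, (X : ℝ[X]) ^ t) ^ r).coeff j
         -- V_{ΣΔ} = I_p ⊗ v
         let V : Fin p → Fin (lam * p) → ℝ :=
           fun i c => if (c : ℕ) / lam = (i : ℕ) then v ((c : ℕ) % lam) else 0
         -- first-order difference matrix D
         let D : Matrix (Fin (lam * p)) (Fin (lam * p)) ℝ :=
           fun a b => if a = b then 1 else if (a : ℕ) = (b : ℕ) + 1 then -1 else 0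
         let nv : ℝ := Real.sqrt (∑ j ∈ Finset.range lam, (v j) ^ 2)
         -- Ṽ_{ΣΔ} = (√2/(√p ‖v‖₂)) V_{ΣΔ}
         let Vt : Fin p → Fin (lam * p) → ℝ :=
           fun i c => (Real.sqrt 2 / (Real.sqrt p * nv)) * V i c
         |∑ i : Fin p, (∑ c, Vt i c * (D ^ r).mulVec ux c) * (∑ c, Vt i c * (D ^ r).mulVec uy c)|)
          ≤ C ^ 2 * c' / (lam : ℝ) ^ (2 * r - 1) := by
  refine ⟨2 * (2 * r) ^ (2 * r), by positivity, ?_⟩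
  intro p lt lam hp hlt hlam C ux uy hux huy
  set P : ℝ[X] := (∑ t ∈ range lt, X ^ t) ^ r
  set S := ∑ j ∈ range lam, P.coeff j ^ 2
  have hS : (lam : ℝ) ^ (2 * r - 1) ≤ r ^ (2 * r) * S :=
    pow_two_mul_sub_one_le_mul_sum_sq_coeff_geom_sum_pow hr hlt hlam
  have hlam_pos : 0 < lam := by omega
  have hS_pos : 0 < S :=
    pos_of_mul_pos_right ((pow_pos (by exact_mod_cast hlam_pos) _).trans_le hS) (by positivity)
  have hrow : ∀ u : Fin (lam * p) → ℝ, (∀ c, |u c| ≤ C) → ∀ i,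
      |(condensation lam p P.coeff *ᵥ (diffMatrix ℝ (lam * p) ^ r *ᵥ u)) i| ≤ 2 ^ r * C := by
    intro u hu i
    have hC : 0 ≤ C := (abs_nonneg _).trans (hu ⟨0, Nat.mul_pos hlam_pos hp⟩)
    rw [condensation_mulVec_diffMatrix_pow_mulVec _ (natDegree_geom_sum_pow_lt hlam), mul_assoc,
      ← mul_pow, geom_sum_mul]
    exact abs_sum_coeff_X_pow_mul_X_pow_sub_one_pow_mul_le u hC hu _ _ _
  refine (abs_sum_normalized_rows_mul_le hp hS_pos _ _ _ (hrow ux hux) (hrow uy huy)).trans ?_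
  rw [div_le_div_iff₀ hS_pos (by positivity)]
  calc 2 * (2 ^ r * C) ^ 2 * (lam : ℝ) ^ (2 * r - 1)
      ≤ 2 * (2 ^ r * C) ^ 2 * (r ^ (2 * r) * S) := by gcongr
    _ = C ^ 2 * (2 * (2 * r) ^ (2 * r)) * S := by ring
end
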